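/- arXiv:1705.07597 — 4 statements merged into one kernel-verified Lean document; each statement's English description precedes it below -/
import Mathlib

section
/- Let H be a Hermitian d×d complex matrix and let A, B, C, D be d×d complex matrices. Then the limit lim_{τ→∞} (1/τ) ∫₀^τ ⟨A e^{iHt} B e^{−iHt} C e^{iHt} D e^{−iHt}⟩ dt exists and equals (1/d) Σ_{p,q,r,s : E_p + E_r = E_q + E_s} A_{pq} B_{qr} C_{rs} D_{sp}, where the sum runs over all quadruples of indices (p,q,r,s) in {1,…,d}⁴ whose eigenvalues satisfy E_p + E_r = E_q + E_s. -/
/-!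
In an eigenbasis of `H`, the evolved operator `e^{iHt} X e^{-iHt}` has entries
`e^{i(E_j - E_k)t} X_{jk}`, so the normalized trace is the trigonometric polynomial
`(1/d) Σ A_{pq} B_{qr} C_{rs} D_{sp} e^{i(E_q + E_s - E_p - E_r)t}`. The time average of `e^{iωt}`
tends to `1` for `ω = 0` and to `0` otherwise, because `∫₀^τ e^{iωt} dt` stays bounded by `2/|ω|`;
only the resonant terms `E_p + E_r = E_q + E_s` survive.
-/

open Matrix Filter
open scoped Classical

noncomputable def nTrace {d : ℕ} (X : Matrix (Fin d) (Fin d) ℂ) : ℂ := X.trace / d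

noncomputable def timeEv {d : ℕ} (H : Matrix (Fin d) (Fin d) ℂ) (t : ℝ)
    (X : Matrix (Fin d) (Fin d) ℂ) : Matrix (Fin d) (Fin d) ℂ :=
  NormedSpace.exp ((Complex.I * t) • H) * X * NormedSpace.exp ((-(Complex.I * t)) • H)

open Complex Topology

noncomputable def timeAverage (f : ℝ → ℂ) (τ : ℝ) : ℂ := (τ : ℂ)⁻¹ * ∫ t in (0 : ℝ)..τ, f t

theorem timeAverage_sum {ι : Type*} (s : Finset ι) {f : ι → ℝ → ℂ}
    (hf : ∀ i ∈ s, Continuous (f i)) (τ : ℝ) :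
    timeAverage (fun t => ∑ i ∈ s, f i t) τ = ∑ i ∈ s, timeAverage (f i) τ := by
  rw [timeAverage, intervalIntegral.integral_finsetSum fun i hi => (hf i hi).intervalIntegrable _ _,
    Finset.mul_sum]
  rfl

theorem timeAverage_const_mul (c : ℂ) (f : ℝ → ℂ) (τ : ℝ) :
    timeAverage (fun t => c * f t) τ = c * timeAverage f τ := by
  simp only [timeAverage, intervalIntegral.integral_const_mul]
  ring

theorem tendsto_timeAverage_one : Tendsto (timeAverage fun _ => 1) atTop (𝓝 1) := by
  refine tendsto_const_nhds.congr' ?_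
  filter_upwards [eventually_ne_atTop 0] with τ hτ
  simp [timeAverage, hτ]

theorem tendsto_timeAverage_exp_of_ne_zero {ω : ℝ} (hω : ω ≠ 0) :
    Tendsto (timeAverage fun t => exp (I * ω * t)) atTop (𝓝 0) := by
  have hIω : I * ω ≠ 0 := by simp [hω]
  refine squeeze_zero_norm (a := fun τ => |τ|⁻¹ * (2 / ‖I * ω‖)) (fun τ => ?_) ?_
  · rw [timeAverage, integral_exp_mul_complex hIω, norm_mul, norm_inv, norm_real, Real.norm_eq_abs,
      norm_div]
    gcongr
    calc ‖exp (I * ω * τ) - exp (I * ω * (0 : ℝ))‖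
        ≤ ‖exp (I * ω * τ)‖ + ‖exp (I * ω * (0 : ℝ))‖ := norm_sub_le _ _
      _ = 2 := by simp only [norm_exp, mul_re, I_re, ofReal_re, I_im, ofReal_im]; norm_num
  · simpa using tendsto_abs_atTop_atTop.inv_tendsto_atTop.mul_const (2 / ‖I * ω‖)

theorem tendsto_timeAverage_exp (ω : ℝ) :
    Tendsto (timeAverage fun t => exp (I * ω * t)) atTop (𝓝 (if ω = 0 then 1 else 0)) := by
  split_ifs with hω
  · simpa [hω] using tendsto_timeAverage_one
  · exact tendsto_timeAverage_exp_of_ne_zero hω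

theorem tendsto_timeAverage_trigPolynomial {ι : Type*} (s : Finset ι) (c : ι → ℂ) (ω : ι → ℝ) :
    Tendsto (timeAverage fun t => ∑ i ∈ s, c i * exp (I * ω i * t)) atTop
      (𝓝 (∑ i ∈ s, if ω i = 0 then c i else 0)) := by
  have hcont : ∀ i ∈ s, Continuous fun t : ℝ => c i * exp (I * ω i * t) := fun i _ => by fun_prop
  simp_rw [funext (timeAverage_sum s hcont), timeAverage_const_mul]
  refine tendsto_finsetSum s fun i _ => ?_
  simpa only [mul_ite, mul_one, mul_zero] using (tendsto_timeAverage_exp (ω i)).const_mul (c i)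

theorem trace_mul_mul_mul_eq_sum {n α : Type*} [Fintype n] [NonUnitalSemiring α]
    (M₁ M₂ M₃ M₄ : Matrix n n α) :
    trace (M₁ * M₂ * M₃ * M₄) = ∑ p, ∑ q, ∑ r, ∑ s, M₁ p q * M₂ q r * M₃ r s * M₄ s p := by
  rw [Matrix.mul_assoc, Matrix.mul_assoc]
  simp only [trace, diag, mul_apply, Finset.mul_sum, mul_assoc]

section Unitary

variable {n : Type*} [Fintype n] [DecidableEq n] {U : Matrix n n ℂ}

theorem exp_smul_unitary_conj_diagonal (hU : U ∈ unitaryGroup n ℂ) (E : n → ℂ) (z : ℂ) :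
    NormedSpace.exp (z • (U * diagonal E * Uᴴ)) = U * diagonal (fun j => exp (z * E j)) * Uᴴ := by
  have hinv : U⁻¹ = Uᴴ := inv_eq_left_inv (Unitary.star_mul_self_of_mem hU)
  rw [← hinv, ← smul_mul_assoc, ← mul_smul_comm, ← diagonal_smul,
    Matrix.exp_conj U _ (Unitary.isUnit_coe (U := ⟨U, hU⟩)), Matrix.exp_diagonal]
  congr
  ext j
  simp [← Complex.exp_eq_exp_ℂ]

theorem trace_unitary_conj_mul_mul_mul (hU : U ∈ unitaryGroup n ℂ) (A B C D : Matrix n n ℂ) :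
    trace (A * B * C * D)
      = trace ((Uᴴ * A * U) * (Uᴴ * B * U) * (Uᴴ * C * U) * (Uᴴ * D * U)) := by
  have hUU : U * Uᴴ = 1 := Unitary.mul_star_self_of_mem hU
  have hcancel : ∀ X : Matrix n n ℂ, U * (Uᴴ * X) = X := fun X => by
    rw [← Matrix.mul_assoc, hUU, Matrix.one_mul]
  simp only [Matrix.mul_assoc, hcancel]
  rw [trace_mul_comm Uᴴ]
  simp only [Matrix.mul_assoc, hUU, Matrix.mul_one]

end Unitary

section Eigenbasis

variable {d : ℕ} {H U : Matrix (Fin d) (Fin d) ℂ} {E : Fin d → ℝ}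

theorem conjTranspose_mul_timeEv_mul_apply (hU : U ∈ unitaryGroup (Fin d) ℂ)
    (hH : H = U * diagonal (fun j => (E j : ℂ)) * Uᴴ) (t : ℝ) (X : Matrix (Fin d) (Fin d) ℂ)
    (j k : Fin d) :
    (Uᴴ * timeEv H t X * U) j k = exp (I * (E j - E k : ℝ) * t) * (Uᴴ * X * U) j k := by
  have hUU : Uᴴ * U = 1 := Unitary.star_mul_self_of_mem hU
  have hcancel : ∀ Y : Matrix (Fin d) (Fin d) ℂ, Uᴴ * (U * Y) = Y := fun Y => by
    rw [← Matrix.mul_assoc, hUU, Matrix.one_mul]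
  rw [timeEv, hH, exp_smul_unitary_conj_diagonal hU, exp_smul_unitary_conj_diagonal hU]
  simp only [Matrix.mul_assoc, hcancel, hUU, Matrix.mul_one]
  simp only [← Matrix.mul_assoc, diagonal_mul, mul_diagonal]
  rw [show I * (E j - E k : ℝ) * t = I * t * E j + -(I * t) * E k by push_cast; ring, exp_add]
  ring

theorem nTrace_mul_timeEv_mul_timeEv (hU : U ∈ unitaryGroup (Fin d) ℂ)
    (hH : H = U * diagonal (fun j => (E j : ℂ)) * Uᴴ) (A B C D : Matrix (Fin d) (Fin d) ℂ)
    (t : ℝ) :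
    nTrace (A * timeEv H t B * C * timeEv H t D)
      = ∑ p, ∑ q, ∑ r, ∑ s,
          (d : ℂ)⁻¹ * ((Uᴴ * A * U) p q * (Uᴴ * B * U) q r * (Uᴴ * C * U) r s * (Uᴴ * D * U) s p)
            * exp (I * (E q + E s - (E p + E r) : ℝ) * t) := by
  rw [nTrace, trace_unitary_conj_mul_mul_mul hU, trace_mul_mul_mul_eq_sum, div_eq_inv_mul,
    Finset.mul_sum]
  simp only [conjTranspose_mul_timeEv_mul_apply hU hH, Finset.mul_sum]
  refine Fintype.sum_congr _ _ fun p => Fintype.sum_congr _ _ fun q => Fintype.sum_congr _ _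
    fun r => Fintype.sum_congr _ _ fun s => ?_
  rw [show I * (E q + E s - (E p + E r) : ℝ) * t
      = I * (E q - E r : ℝ) * t + I * (E s - E p : ℝ) * t by push_cast; ring, exp_add]
  ring

end Eigenbasis

theorem stmt2 (d : ℕ) (H : Matrix (Fin d) (Fin d) ℂ)
    (U : Matrix (Fin d) (Fin d) ℂ) (hU : U ∈ Matrix.unitaryGroup (Fin d) ℂ)
    (E : Fin d → ℝ) (hH : H = U * Matrix.diagonal (fun j => (E j : ℂ)) * Uᴴ)
    (A B C D : Matrix (Fin d) (Fin d) ℂ) :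
    Tendsto (fun τ : ℝ => (τ : ℂ)⁻¹ * ∫ t in (0:ℝ)..τ,
        nTrace (A * timeEv H t B * C * timeEv H t D)) atTop
      (nhds ((1 / d) * ∑ p : Fin d, ∑ q : Fin d, ∑ r : Fin d, ∑ s : Fin d,
        if E p + E r = E q + E s then
          (Uᴴ * A * U) p q * (Uᴴ * B * U) q r * (Uᴴ * C * U) r s * (Uᴴ * D * U) s p
        else 0)) := by
  have hlim := tendsto_timeAverage_trigPolynomial
    (Finset.univ : Finset (Fin d × Fin d × Fin d × Fin d))
    (fun x => (d : ℂ)⁻¹ * ((Uᴴ * A * U) x.1 x.2.1 * (Uᴴ * B * U) x.2.1 x.2.2.1 *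
      (Uᴴ * C * U) x.2.2.1 x.2.2.2 * (Uᴴ * D * U) x.2.2.2 x.1))
    (fun x => E x.2.1 + E x.2.2.2 - (E x.1 + E x.2.2.1))
  simp only [Fintype.sum_prod_type, ← nTrace_mul_timeEv_mul_timeEv hU hH, sub_eq_zero] at hlim
  show Tendsto (timeAverage fun t => _) _ _
  convert hlim using 2
  simp only [one_div, Finset.mul_sum, mul_ite, mul_zero, eq_comm]
end

section
/- For every positive integer m there exists a constant C_m > 0 (depending only on m) such that for every n ≥ 3 and every nearest-neighbor Hamiltonian H = Σ_{i∈ℤ/nℤ} H_i on n qubits with tr H_i = 0 and ‖H_i‖ ≤ 1 for all i, one has |tr(H^m)|/2^n ≤ C_m n^{⌊m/2⌋}. -/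
open Matrix Filter Finset
open scoped Classical

/-- computational basis configurations of `n` qubits -/
abbrev Cfg (n : ℕ) := Fin n → Fin 2

/-- the site following `i` in the cyclic order on `ℤ/nℤ` -/
def nxt {n : ℕ} (i : Fin n) : Fin n :=
  ⟨(i.1 + 1) % n, Nat.mod_lt _ (Nat.lt_of_le_of_lt (Nat.zero_le _) i.2)⟩

/-- the operator acting as the 4×4 matrix `h` on the two neighboring sites `i, i+1`
and as the identity elsewhere -/
noncomputable def twoSite (n : ℕ) (i : Fin n)
    (h : Matrix (Fin 2 × Fin 2) (Fin 2 × Fin 2) ℂ) : Matrix (Cfg n) (Cfg n) ℂ :=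
  fun x y =>
    if ∀ j : Fin n, j ≠ i → j ≠ nxt i → x j = y j then
      h (x i, x (nxt i)) (y i, y (nxt i))
    else 0

/-- the ℓ²→ℓ² operator norm of a matrix -/
noncomputable def opNorm {d : Type*} [Fintype d] [DecidableEq d] (X : Matrix d d ℂ) : ℝ :=
  ‖LinearMap.toContinuousLinearMap (Matrix.toEuclideanLin X)‖

/-!
Expanding `H ^ m` writes `tr (H ^ m)` as a sum over words `f : Fin m → Fin n` of
`tr (H_{f 0} ⋯ H_{f (m-1)})`. If the bond of some letter is disjoint from the bonds of all the
other letters, cycling the trace pairs `H_{f k} = h ⊗ 1` against an operator acting trivially on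
that bond, so the trace factorises and vanishes because `tr H_{f k} = 0`. Every other word
contributes at most `2 ^ n`, as `|tr X| ≤ 2 ^ n ‖X‖`. In a surviving word each letter lies within
cyclic distance `1` of another one; at most `m / 2` letters are not within distance `2` of an
earlier letter, and each of the others is determined by an earlier position and an offset in
`[-2, 2]`, so at most `2 ^ m (5 m) ^ m n ^ (m / 2)` words survive.
-/

open Set

theorem Set.exists_notMem_ne_of_not_eqOn_compl {α β : Type*} {s : Set α} {f g : α → β}
    (h : ¬ EqOn f g sᶜ) : ∃ j ∉ s, f j ≠ g j := by
  simpa [EqOn] using h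

namespace Matrix

variable {ι σ R : Type*} [CommSemiring R]

/-- Matrices of the form `X₀ ⊗ 1`, with `X₀` acting on the tensor factors indexed by `s`. -/
def SupportedOn (s : Set ι) (X : Matrix (ι → σ) (ι → σ) R) : Prop :=
  (∀ x y, ¬ EqOn x y sᶜ → X x y = 0) ∧
    ∀ x y x' y', EqOn x x' s → EqOn y y' s → EqOn x y sᶜ → EqOn x' y' sᶜ → X x y = X x' y'

namespace SupportedOn

variable {s t : Set ι} {X Y : Matrix (ι → σ) (ι → σ) R}

theorem apply_self_eq (hX : SupportedOn s X) {x x' : ι → σ} (h : EqOn x x' s) :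
    X x x = X x' x' :=
  hX.2 x x x' x' h h (fun _ _ ↦ rfl) (fun _ _ ↦ rfl)

theorem mono (hX : SupportedOn s X) (hst : s ⊆ t) : SupportedOn t X := by
  refine ⟨fun x y hxy ↦ hX.1 x y fun h ↦ hxy (h.mono (compl_subset_compl.2 hst)), ?_⟩
  intro x y x' y' hx hy hxy hxy'
  by_cases hs : EqOn x y sᶜ
  · refine hX.2 x y x' y' (hx.mono hst) (hy.mono hst) hs fun j hj ↦ ?_
    by_cases hjt : j ∈ t
    · rw [← hx hjt, ← hy hjt]; exact hs hj
    · exact hxy' hjt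
  · obtain ⟨j, hjs, hj⟩ := exists_notMem_ne_of_not_eqOn_compl hs
    have hjt : j ∈ t := by_contra fun hjt ↦ hj (hxy hjt)
    rw [hX.1 x y hs, hX.1 x' y' fun h ↦ hj (by rw [hx hjt, hy hjt]; exact h hjs)]

end SupportedOn

theorem supportedOn_one [Fintype ι] [DecidableEq σ] (s : Set ι) :
    SupportedOn s (1 : Matrix (ι → σ) (ι → σ) R) := by
  refine ⟨fun x y hxy ↦ one_apply_ne fun h ↦ hxy (h ▸ fun _ _ ↦ rfl), ?_⟩
  intro x y x' y' hx hy hxy hxy'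
  have : x = y ↔ x' = y' := by
    constructor <;> rintro rfl <;> funext j <;> by_cases hj : j ∈ s
    · rw [← hx hj, ← hy hj]
    · exact hxy' hj
    · rw [hx hj, hy hj]
    · exact hxy hj
  simp only [one_apply, this]

namespace SupportedOn

variable [Fintype ι] [DecidableEq ι] [Fintype σ] {s t : Set ι} {X Y : Matrix (ι → σ) (ι → σ) R}

theorem mul (hX : SupportedOn s X) (hY : SupportedOn s Y) : SupportedOn s (X * Y) := by
  constructor
  · intro x y hxy
    obtain ⟨j, hjs, hj⟩ := exists_notMem_ne_of_not_eqOn_compl hxy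
    rw [mul_apply]
    refine Finset.sum_eq_zero fun z _ ↦ ?_
    by_cases hz : x j = z j
    · rw [hY.1 z y fun h ↦ hj (hz ▸ h hjs), mul_zero]
    · rw [hX.1 x z fun h ↦ hz (h hjs), zero_mul]
  · intro x y x' y' hx hy hxy hxy'
    -- reindex the intermediate configurations by swapping `x j` and `x' j` at every site `j ∉ s`
    let e : (ι → σ) ≃ (ι → σ) := Equiv.piCongrRight fun j ↦
      if j ∈ s then Equiv.refl σ else Equiv.swap (x j) (x' j)
    have he_mem : ∀ z, EqOn z (e z) s := fun z j hj ↦ by simp [e, hj]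
    have he_nmem : ∀ z j, j ∉ s → e z j = Equiv.swap (x j) (x' j) (z j) := fun z j hj ↦ by
      simp [e, hj]
    simp only [mul_apply]
    refine Fintype.sum_equiv e _ _ fun z ↦ ?_
    by_cases hz : EqOn x z sᶜ
    · have hz' : EqOn x' (e z) sᶜ := fun j hj ↦ by
        rw [he_nmem z j hj, ← hz hj, Equiv.swap_apply_left]
      rw [hX.2 x z x' (e z) hx (he_mem z) hz hz',
        hY.2 z y (e z) y' (he_mem z) hy (hz.symm.trans hxy) (hz'.symm.trans hxy')]
    · obtain ⟨j, hjs, hj⟩ := exists_notMem_ne_of_not_eqOn_compl hz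
      have hj' : x' j ≠ e z j := fun h ↦ hj <| (Equiv.swap (x j) (x' j)).injective <| by
        rw [Equiv.swap_apply_left, ← he_nmem z j hjs, h]
      rw [hX.1 x z hz, hX.1 x' (e z) fun h ↦ hj' (h hjs), zero_mul, zero_mul]

theorem list_prod [DecidableEq σ] {l : List (Matrix (ι → σ) (ι → σ) R)}
    (hl : ∀ X ∈ l, SupportedOn s X) : SupportedOn s l.prod := by
  induction l with
  | nil => exact supportedOn_one s
  | cons X l ih =>
    rw [List.prod_cons]
    exact (hl X List.mem_cons_self).mul (ih fun Y hY ↦ hl Y (List.mem_cons_of_mem X hY))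

theorem mul_apply_self (hX : SupportedOn s X) (hY : SupportedOn t Y) (hst : Disjoint s t)
    (x : ι → σ) : (X * Y) x x = X x x * Y x x := by
  rw [mul_apply]
  refine Finset.sum_eq_single x (fun z _ hz ↦ ?_) (by simp)
  obtain ⟨j, hj⟩ : ∃ j, x j ≠ z j := by simpa [funext_iff, eq_comm] using hz
  by_cases hjs : j ∈ s
  · rw [hY.1 z x fun h ↦ hj (h (hst.notMem_of_mem_left hjs)).symm, mul_zero]
  · rw [hX.1 x z fun h ↦ hj (h hjs), zero_mul]

theorem trace_mul_trace (hX : SupportedOn s X) (hY : SupportedOn t Y) (hst : Disjoint s t) :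
    X.trace * Y.trace = Fintype.card (ι → σ) * (X * Y).trace := by
  let F : (ι → σ) → R := fun z ↦ X z z * Y z z
  -- `X x x * Y y y` only sees `x` on `s` and `y` on `t`: merge them into one configuration
  let φ : (ι → σ) × (ι → σ) → (ι → σ) × (ι → σ) := fun p ↦
    (t.piecewise p.2 p.1, t.piecewise p.1 p.2)
  have hφ : Function.Involutive φ := fun p ↦ by
    ext j <;> by_cases hj : j ∈ t <;> simp [φ, hj]
  have hF : ∀ p : (ι → σ) × (ι → σ), X p.1 p.1 * Y p.2 p.2 = F (φ p).1 := fun p ↦ by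
    rw [hX.apply_self_eq fun j hj ↦ (Set.piecewise_eq_of_notMem _ _ _
        (hst.notMem_of_mem_left hj)).symm,
      hY.apply_self_eq fun j hj ↦ (Set.piecewise_eq_of_mem _ _ _ hj).symm]
  calc X.trace * Y.trace = ∑ p : (ι → σ) × (ι → σ), X p.1 p.1 * Y p.2 p.2 := by
        simp only [trace, diag, Finset.sum_mul_sum, Fintype.sum_prod_type]
    _ = ∑ p : (ι → σ) × (ι → σ), F p.1 := by
        simp only [hF]
        exact Fintype.sum_bijective φ hφ.bijective _ _ fun _ ↦ rfl
    _ = Fintype.card (ι → σ) * ∑ x, F x := by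
        simp [Fintype.sum_prod_type, Finset.mul_sum]
    _ = Fintype.card (ι → σ) * (X * Y).trace := by
        simp only [trace, diag, hX.mul_apply_self hY hst, F]

theorem trace_mul_eq_zero [NoZeroDivisors R] [CharZero R] [Nonempty σ]
    (hX : SupportedOn s X) (hY : SupportedOn t Y) (hst : Disjoint s t) (htr : X.trace = 0) :
    (X * Y).trace = 0 := by
  have h := hX.trace_mul_trace hY hst
  rw [htr, zero_mul, eq_comm, mul_eq_zero] at h
  exact h.resolve_left (Nat.cast_ne_zero.2 Fintype.card_ne_zero)

end SupportedOn

section Isolated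

variable [NoZeroDivisors R] [CharZero R] [Fintype ι] [DecidableEq ι] [Fintype σ] [DecidableEq σ]
  [Nonempty σ]

theorem trace_list_prod_eq_zero_of_isolated {l : List (Matrix (ι → σ) (ι → σ) R)} {k : ℕ}
    (hk : k < l.length) {s : Set ι} (hs : SupportedOn s l[k]) (htr : l[k].trace = 0)
    (hrest : ∀ Y ∈ l.eraseIdx k, SupportedOn sᶜ Y) : l.prod.trace = 0 := by
  rw [List.eraseIdx_eq_take_drop_succ] at hrest
  have htake := SupportedOn.list_prod fun Y hY ↦ hrest Y (List.mem_append_left _ hY)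
  have hdrop := SupportedOn.list_prod fun Y hY ↦ hrest Y (List.mem_append_right _ hY)
  rw [← List.prod_take_mul_prod_drop l (k + 1), List.prod_take_succ l k hk, mul_assoc,
    trace_mul_comm, mul_assoc]
  exact hs.trace_mul_eq_zero (hdrop.mul htake) disjoint_compl_right htr

theorem trace_prod_ofFn_eq_zero_of_isolated {m : ℕ} (B : Fin m → Matrix (ι → σ) (ι → σ) R)
    (k : Fin m) {s : Set ι} (hs : SupportedOn s (B k)) (htr : (B k).trace = 0)
    (hrest : ∀ j ≠ k, SupportedOn sᶜ (B j)) : (List.ofFn B).prod.trace = 0 := by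
  refine trace_list_prod_eq_zero_of_isolated (k := k) (by simp) (by simpa using hs)
    (by simpa using htr) fun Y hY ↦ ?_
  obtain ⟨i, hi, hik, rfl⟩ := List.mem_eraseIdx_iff_getElem.1 hY
  rw [List.getElem_ofFn]
  exact hrest _ fun h ↦ hik (by simp [← h])

end Isolated

end Matrix

section L2OpNorm

open scoped Matrix.Norms.L2Operator

variable {d : Type*} [Fintype d] [DecidableEq d]

theorem opNorm_eq_norm (X : Matrix d d ℂ) : opNorm X = ‖X‖ := rfl

theorem norm_apply_le_opNorm (X : Matrix d d ℂ) (a b : d) : ‖X a b‖ ≤ opNorm X := by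
  have h := X.l2_opNorm_mulVec (EuclideanSpace.single b 1)
  rw [PiLp.norm_single, norm_one, mul_one] at h
  refine le_trans (le_of_eq ?_) ((PiLp.norm_apply_le _ a).trans h)
  simp

theorem norm_trace_le_card_mul_opNorm (X : Matrix d d ℂ) :
    ‖X.trace‖ ≤ Fintype.card d * opNorm X :=
  calc ‖X.trace‖ ≤ ∑ i, ‖X i i‖ := norm_sum_le _ _
    _ ≤ ∑ _i : d, opNorm X := Finset.sum_le_sum fun i _ ↦ norm_apply_le_opNorm X i i
    _ = Fintype.card d * opNorm X := by simp

theorem opNorm_list_prod_le_one [Nonempty d] {l : List (Matrix d d ℂ)}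
    (hl : ∀ X ∈ l, opNorm X ≤ 1) : opNorm l.prod ≤ 1 := by
  induction l with
  | nil => rw [List.prod_nil, opNorm_eq_norm]; exact norm_one.le
  | cons X l ih =>
    rw [List.prod_cons, opNorm_eq_norm]
    exact (norm_mul_le _ _).trans <| mul_le_one₀ (hl X List.mem_cons_self) (norm_nonneg _)
      (ih fun Y hY ↦ hl Y (List.mem_cons_of_mem X hY))

end L2OpNorm

theorem sum_pow_eq_sum_prod_ofFn {M ι : Type*} [Semiring M] [Fintype ι] (A : ι → M) (m : ℕ) :
    (∑ i, A i) ^ m = ∑ f : Fin m → ι, (List.ofFn fun k ↦ A (f k)).prod := by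
  induction m with
  | zero => simp
  | succ m ih =>
    calc (∑ i, A i) ^ (m + 1)
        = ∑ p : ι × (Fin m → ι), A p.1 * (List.ofFn fun k ↦ A (p.2 k)).prod := by
          rw [pow_succ', ih, Finset.sum_mul_sum, Fintype.sum_prod_type]
      _ = ∑ f : Fin (m + 1) → ι, (List.ofFn fun k ↦ A (f k)).prod :=
          Fintype.sum_equiv (Fin.consEquiv fun _ ↦ ι) _ _ fun p ↦ by
            rw [List.ofFn_succ, List.prod_cons]; rfl

theorem norm_trace_pow_sum_le {ι d : Type*} [Fintype ι] [Fintype d] [DecidableEq d] [Nonempty d]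
    (A : ι → Matrix d d ℂ) (hA : ∀ i, opNorm (A i) ≤ 1) {m : ℕ} (B : Finset (Fin m → ι))
    (hB : ∀ f ∉ B, (List.ofFn fun k ↦ A (f k)).prod.trace = 0) :
    ‖((∑ i, A i) ^ m).trace‖ ≤ #B * Fintype.card d := by
  rw [sum_pow_eq_sum_prod_ofFn, Matrix.trace_sum,
    ← Finset.sum_subset (Finset.subset_univ B) fun f _ hf ↦ hB f hf]
  calc _ ≤ ∑ f ∈ B, ‖(List.ofFn fun k ↦ A (f k)).prod.trace‖ := norm_sum_le _ _
    _ ≤ ∑ _f ∈ B, (Fintype.card d : ℝ) := Finset.sum_le_sum fun f _ ↦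
        (norm_trace_le_card_mul_opNorm _).trans <| mul_le_of_le_one_right (Nat.cast_nonneg _) <|
          opNorm_list_prod_le_one fun X hX ↦ by
            obtain ⟨k, rfl⟩ := List.mem_ofFn.1 hX
            exact hA (f k)
    _ = #B * Fintype.card d := by simp

def CyclicNear (n r : ℕ) (a b : Fin n) : Prop :=
  ∃ c : ℤ, c.natAbs ≤ r ∧ ((b : ℕ) : ZMod n) = (a : ℕ) + c

namespace CyclicNear

variable {n r r' : ℕ} {a b c : Fin n}

theorem mono (h : CyclicNear n r a b) (hr : r ≤ r') : CyclicNear n r' a b :=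
  let ⟨c, hc, he⟩ := h
  ⟨c, hc.trans hr, he⟩

theorem symm (h : CyclicNear n r a b) : CyclicNear n r b a :=
  let ⟨c, hc, he⟩ := h
  ⟨-c, by simpa using hc, by rw [he]; push_cast; ring⟩

theorem trans (h₁ : CyclicNear n r a b) (h₂ : CyclicNear n r' b c) :
    CyclicNear n (r + r') a c :=
  let ⟨c₁, hc₁, he₁⟩ := h₁
  let ⟨c₂, hc₂, he₂⟩ := h₂
  ⟨c₁ + c₂, by omega, by rw [he₂, he₁]; push_cast; ring⟩

end CyclicNear

theorem Fin.eq_of_natCast_zmod_eq {n : ℕ} {a b : Fin n} (h : ((a : ℕ) : ZMod n) = (b : ℕ)) :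
    a = b := by
  rw [ZMod.natCast_eq_natCast_iff'] at h
  exact Fin.ext (by simpa [Nat.mod_eq_of_lt a.2, Nat.mod_eq_of_lt b.2] using h)

section Counting

variable {m n : ℕ}

def IsRevisit (f : Fin m → Fin n) (k : Fin m) : Prop :=
  ∃ j < k, CyclicNear n 2 (f j) (f k)

/-- A letter that is not a revisit has only later partners, which are revisits; two such letters
with a common partner would be within distance `2`, so choosing partners is injective. -/
theorem card_filter_not_isRevisit_le {f : Fin m → Fin n}
    (hf : ∀ k, ∃ j ≠ k, CyclicNear n 1 (f k) (f j)) : #{k | ¬ IsRevisit f k} * 2 ≤ m := by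
  choose p hp_ne hp using hf
  have hlt : ∀ k, ¬ IsRevisit f k → k < p k := fun k hk ↦
    (lt_or_gt_of_ne (hp_ne k)).resolve_left fun h ↦ hk ⟨p k, h, (hp k).symm.mono (by omega)⟩
  set F : Finset (Fin m) := {k | ¬ IsRevisit f k}
  have hmaps : Set.MapsTo p F ({k | IsRevisit f k} : Finset (Fin m)) := fun k hk ↦ by
    simp only [F, Finset.coe_filter, Finset.mem_univ, true_and] at hk ⊢
    exact ⟨k, hlt k hk, (hp k).mono (by omega)⟩
  have hinj : Set.InjOn p F := by
    have key : ∀ a b, ¬ IsRevisit f b → p a = p b → ¬ a < b := fun a b hb hab hlt ↦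
      hb ⟨a, hlt, ((hp a).trans (hab ▸ (hp b).symm)).mono le_rfl⟩
    intro a ha b hb hab
    simp only [F, Finset.coe_filter, Finset.mem_univ, true_and] at ha hb
    exact le_antisymm (not_lt.1 (key b a ha hab.symm)) (not_lt.1 (key a b hb hab))
  have hcard := Finset.card_le_card_of_injOn p hmaps hinj
  have hsum : #({k | IsRevisit f k} : Finset (Fin m)) + #F = m := by
    simpa using Finset.card_filter_add_card_filter_not (s := Finset.univ) (IsRevisit f)
  omega

/-- A word is recovered from its letters at `S` together with, at each revisit `k ∉ S`, an
earlier position `j` and the offset `f k - f j ∈ [-2, 2]`. -/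
theorem card_filter_isRevisit_le (S : Finset (Fin m)) :
    #{f : Fin m → Fin n | ∀ k ∉ S, IsRevisit f k} ≤ n ^ #S * (5 * m) ^ m := by
  have hcode : ∀ (f : Fin m → Fin n) k, ∃ w : Fin m × Fin 5, IsRevisit f k →
      w.1 < k ∧ ((f k : ℕ) : ZMod n) = (f w.1 : ℕ) + ((w.2 : ℕ) - 2 : ℤ) := by
    intro f k
    by_cases hk : IsRevisit f k
    · obtain ⟨j, hj, c, hc, he⟩ := hk
      exact ⟨(j, ⟨(c + 2).toNat, by omega⟩), fun _ ↦ ⟨hj, by rw [he]; congr; dsimp only; omega⟩⟩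
    · exact ⟨(k, 0), fun h ↦ absurd h hk⟩
  choose code hcode using hcode
  let enc : (Fin m → Fin n) → (S → Fin n) × (Fin m → Fin m × Fin 5) :=
    fun f ↦ (fun k ↦ f k, code f)
  have hinj : Set.InjOn enc ({f | ∀ k ∉ S, IsRevisit f k} : Finset (Fin m → Fin n)) := by
    intro f hf g hg he
    simp only [Finset.coe_filter, Finset.mem_univ, true_and] at hf hg
    funext k
    induction k using WellFoundedLT.induction with
    | _ k ih =>
      by_cases hkS : k ∈ S
      · exact congrFun (congrArg Prod.fst he) ⟨k, hkS⟩
      · have hcg : code f k = code g k := congrFun (congrArg Prod.snd he) k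
        obtain ⟨hjf, hf'⟩ := hcode f k (hf k hkS)
        obtain ⟨-, hg'⟩ := hcode g k (hg k hkS)
        refine Fin.eq_of_natCast_zmod_eq ?_
        rw [hf', hg', ← hcg, ih _ hjf]
  calc #{f : Fin m → Fin n | ∀ k ∉ S, IsRevisit f k}
      ≤ Fintype.card ((S → Fin n) × (Fin m → Fin m × Fin 5)) :=
        Finset.card_le_card_of_injOn enc (fun _ _ ↦ Finset.mem_coe.2 (Finset.mem_univ _)) hinj
    _ = n ^ #S * (5 * m) ^ m := by simp [mul_comm]

theorem card_filter_forall_exists_cyclicNear_le (hn : 0 < n) :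
    #{f : Fin m → Fin n | ∀ k, ∃ j ≠ k, CyclicNear n 1 (f k) (f j)}
      ≤ 2 ^ m * (5 * m) ^ m * n ^ (m / 2) := by
  let T : Finset (Fin m) → Finset (Fin m → Fin n) := fun S ↦ {f | ∀ k ∉ S, IsRevisit f k}
  let small : Finset (Finset (Fin m)) := {S | #S ≤ m / 2}
  have hsub : ({f | ∀ k, ∃ j ≠ k, CyclicNear n 1 (f k) (f j)} : Finset (Fin m → Fin n))
      ⊆ small.biUnion T := fun f hf ↦ by
    simp only [Finset.mem_filter, Finset.mem_univ, true_and] at hf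
    refine Finset.mem_biUnion.2 ⟨({k | ¬ IsRevisit f k} : Finset (Fin m)), ?_, ?_⟩
    · simp only [small, Finset.mem_filter, Finset.mem_univ, true_and]
      have := card_filter_not_isRevisit_le hf
      omega
    · simp [T]
  calc _ ≤ #(small.biUnion T) := Finset.card_le_card hsub
    _ ≤ ∑ S ∈ small, #(T S) := Finset.card_biUnion_le
    _ ≤ ∑ _S ∈ small, n ^ (m / 2) * (5 * m) ^ m := Finset.sum_le_sum fun S hS ↦
        (card_filter_isRevisit_le S).trans <| Nat.mul_le_mul_right _ <|
          Nat.pow_le_pow_right hn (Finset.mem_filter.1 hS).2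
    _ ≤ 2 ^ m * (n ^ (m / 2) * (5 * m) ^ m) := by
        rw [Finset.sum_const, smul_eq_mul]
        refine Nat.mul_le_mul_right _ ((Finset.card_filter_le _ _).trans ?_)
        simp
    _ = 2 ^ m * (5 * m) ^ m * n ^ (m / 2) := by ring

end Counting

section Chain

variable {n : ℕ}

def bond (i : Fin n) : Set (Fin n) := {i, nxt i}

theorem supportedOn_twoSite (i : Fin n) (h : Matrix (Fin 2 × Fin 2) (Fin 2 × Fin 2) ℂ) :
    (twoSite n i h).SupportedOn (bond i) := by
  have hoff : ∀ x y : Cfg n, EqOn x y (bond i)ᶜ ↔ ∀ j, j ≠ i → j ≠ nxt i → x j = y j := by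
    simp [EqOn, bond, and_imp]
  refine ⟨fun x y hxy ↦ by rw [twoSite, if_neg ((hoff x y).not.1 hxy)], ?_⟩
  intro x y x' y' hx hy hxy hxy'
  have hi : i ∈ bond i := by simp [bond]
  have hni : nxt i ∈ bond i := by simp [bond]
  rw [twoSite, twoSite, if_pos ((hoff x y).1 hxy), if_pos ((hoff x' y').1 hxy'),
    hx hi, hx hni, hy hi, hy hni]

theorem natCast_nxt (i : Fin n) : ((nxt i : ℕ) : ZMod n) = (i : ℕ) + 1 := by
  simp [nxt, ZMod.natCast_mod]

theorem cyclicNear_of_not_disjoint_bond {a b : Fin n} (h : ¬ Disjoint (bond a) (bond b)) :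
    CyclicNear n 1 a b := by
  obtain ⟨s, hsa, hsb⟩ := Set.not_disjoint_iff.1 h
  have ha := natCast_nxt a
  have hb := natCast_nxt b
  simp only [bond, Set.mem_insert_iff, Set.mem_singleton_iff] at hsa hsb
  rcases hsa with rfl | rfl <;> rcases hsb with rfl | hsb
  · exact ⟨0, Nat.zero_le _, by simp⟩
  · exact ⟨-1, le_rfl, by rw [hsb, hb]; push_cast; ring⟩
  · exact ⟨1, le_rfl, by push_cast; exact ha⟩
  · exact ⟨0, Nat.zero_le _, by rw [hsb, hb] at ha; push_cast; linear_combination ha⟩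

end Chain

theorem stmt6_general (m : ℕ) :
    ∃ C : ℝ, 0 < C ∧ ∀ n : ℕ, 3 ≤ n →
      ∀ h : Fin n → Matrix (Fin 2 × Fin 2) (Fin 2 × Fin 2) ℂ,
        (∀ i, (twoSite n i (h i)).IsHermitian) →
        (∀ i, (twoSite n i (h i)).trace = 0) →
        (∀ i, opNorm (twoSite n i (h i)) ≤ 1) →
        ‖((∑ i : Fin n, twoSite n i (h i)) ^ m).trace‖ / 2 ^ n ≤
          C * (n : ℝ) ^ (m / 2) := by
  have hC : 0 < 2 ^ m * (5 * m) ^ m := Nat.mul_pos (by positivity) (Nat.pow_pos_iff.2 (by omega))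
  refine ⟨(2 ^ m * (5 * m) ^ m : ℕ), by exact_mod_cast hC, fun n hn h _ htr hnorm ↦ ?_⟩
  let B : Finset (Fin m → Fin n) := {f | ∀ k, ∃ j ≠ k, ¬ Disjoint (bond (f k)) (bond (f j))}
  have hB : ∀ f ∉ B, (List.ofFn fun k ↦ twoSite n (f k) (h (f k))).prod.trace = 0 := by
    intro f hf
    obtain ⟨k, hk⟩ : ∃ k, ∀ j ≠ k, Disjoint (bond (f k)) (bond (f j)) := by simpa [B] using hf
    exact Matrix.trace_prod_ofFn_eq_zero_of_isolated _ k (supportedOn_twoSite _ _) (htr _)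
      fun j hj ↦ (supportedOn_twoSite _ _).mono (hk j hj).subset_compl_left
  have hcard : #B ≤ 2 ^ m * (5 * m) ^ m * n ^ (m / 2) :=
    (Finset.card_le_card (Finset.monotone_filter_right _ fun f _ hf k ↦
      (hf k).imp fun _ hj ↦ hj.imp_right cyclicNear_of_not_disjoint_bond)).trans
      (card_filter_forall_exists_cyclicNear_le (by omega))
  have htrace := norm_trace_pow_sum_le (fun i ↦ twoSite n i (h i)) hnorm B hB
  rw [div_le_iff₀ (by positivity)]
  calc _ ≤ (#B : ℝ) * 2 ^ n := by simpa [Fintype.card_fun] using htrace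
    _ ≤ ((2 ^ m * (5 * m) ^ m * n ^ (m / 2) : ℕ) : ℝ) * 2 ^ n := by gcongr
    _ = _ := by push_cast; ring

theorem stmt6 (m : ℕ) (hm : 0 < m) :
    ∃ C : ℝ, 0 < C ∧ ∀ n : ℕ, 3 ≤ n →
      ∀ h : Fin n → Matrix (Fin 2 × Fin 2) (Fin 2 × Fin 2) ℂ,
        (∀ i, (twoSite n i (h i)).IsHermitian) →
        (∀ i, (twoSite n i (h i)).trace = 0) →
        (∀ i, opNorm (twoSite n i (h i)) ≤ 1) →
        ‖((∑ i : Fin n, twoSite n i (h i)) ^ m).trace‖ / 2 ^ n ≤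
          C * (n : ℝ) ^ (m / 2) :=
  stmt6_general m
end

section
/- Let H be a Hermitian d×d complex matrix with orthonormal eigenbasis |1⟩,…,|d⟩ and eigenvalues E_1,…,E_d, let Δ > 0, and for each j let Q_j := Σ_{k : |E_k − E_j| ≥ Δ} |k⟩⟨k|. Then for all d×d complex matrices A, B, C, D: | (1/d) Σ_j Σ_{k : |E_k − E_j| ≥ Δ} A_{jj} B_{jk} C_{kk} D_{kj} | ≤ (‖C‖/d) Σ_j |A_{jj}| · ‖Q_j B† |j⟩‖ · ‖Q_j D |j⟩‖, where ‖·‖ is the operator norm on matrices and the Euclidean norm on vectors. -/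
open Matrix Finset
open scoped Classical

/-- the Euclidean norm of a vector -/
noncomputable def evNorm {d : Type*} [Fintype d] (v : d → ℂ) : ℝ :=
  Real.sqrt (∑ i, norm (v i) ^ 2)

/-!
In the eigenbasis of `H` (the columns of `U`) everything is explicit: `Q_j B† |j⟩` is `U` applied
to the vector with coordinates `conj B_{jk}` for `k` in the window `|E_k - E_j| ≥ Δ` and `0`
elsewhere, so its norm is `(∑_k |B_{jk}|²)^{1/2}` over the window, and likewise for `Q_j D |j⟩`.
Each diagonal entry `C_{kk} = ⟨k|C|k⟩` has modulus at most `‖C‖`, so after the triangle inequality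
the inner sum over `k` is bounded by Cauchy–Schwarz.
-/

lemma norm_sum_mul_mul_le {ι : Type*} (s : Finset ι) (x c y : ι → ℂ) {K : ℝ} (hK : 0 ≤ K)
    (hc : ∀ k ∈ s, ‖c k‖ ≤ K) :
    ‖∑ k ∈ s, x k * c k * y k‖ ≤
      K * (√(∑ k ∈ s, ‖x k‖ ^ 2) * √(∑ k ∈ s, ‖y k‖ ^ 2)) :=
  calc ‖∑ k ∈ s, x k * c k * y k‖ ≤ ∑ k ∈ s, ‖x k * c k * y k‖ := norm_sum_le _ _
    _ ≤ ∑ k ∈ s, K * (‖x k‖ * ‖y k‖) := Finset.sum_le_sum fun k hk => by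
        rw [norm_mul, norm_mul, mul_right_comm, mul_comm K]
        gcongr
        exact hc k hk
    _ = K * ∑ k ∈ s, ‖x k‖ * ‖y k‖ := (Finset.mul_sum _ _ _).symm
    _ ≤ _ := mul_le_mul_of_nonneg_left (Real.sum_mul_le_sqrt_mul_sqrt _ _ _) hK

lemma norm_sum_diag_mul_offDiag_le {ι : Type*} [Fintype ι] (S : ι → Finset ι)
    (a b c e : Matrix ι ι ℂ) {K : ℝ} (hK : 0 ≤ K) (hc : ∀ k, ‖c k k‖ ≤ K) :
    ‖∑ j, ∑ k ∈ S j, a j j * b j k * c k k * e k j‖ ≤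
      K * ∑ j, ‖a j j‖ * √(∑ k ∈ S j, ‖b j k‖ ^ 2) * √(∑ k ∈ S j, ‖e k j‖ ^ 2) :=
  calc ‖∑ j, ∑ k ∈ S j, a j j * b j k * c k k * e k j‖
      ≤ ∑ j, ‖a j j‖ * ‖∑ k ∈ S j, b j k * c k k * e k j‖ := by
        refine (norm_sum_le _ _).trans_eq (Finset.sum_congr rfl fun j _ => ?_)
        rw [← norm_mul, Finset.mul_sum]
        simp only [mul_assoc]
    _ ≤ ∑ j, ‖a j j‖ * (K * (√(∑ k ∈ S j, ‖b j k‖ ^ 2) * √(∑ k ∈ S j, ‖e k j‖ ^ 2))) := by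
        gcongr with j
        exact norm_sum_mul_mul_le _ _ _ _ hK fun k _ => hc k
    _ = _ := by
        rw [Finset.mul_sum]
        exact Finset.sum_congr rfl fun j _ => by ring

section

variable {n : Type*} [Fintype n]

lemma sum_norm_sq_eq_re_star_dotProduct (v : n → ℂ) :
    ∑ i, ‖v i‖ ^ 2 = (star v ⬝ᵥ v).re := by
  rw [dotProduct, Complex.re_sum]
  refine Finset.sum_congr rfl fun i _ => ?_
  rw [Pi.star_apply, Complex.star_def, ← Complex.normSq_eq_norm_sq,
    ← Complex.ofReal_re (Complex.normSq _), Complex.normSq_eq_conj_mul_self]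

lemma norm_star_dotProduct_le (u w : n → ℂ) : ‖star u ⬝ᵥ w‖ ≤ evNorm u * evNorm w :=
  calc ‖star u ⬝ᵥ w‖ ≤ ∑ i, ‖star (u i) * w i‖ := norm_sum_le _ _
    _ = ∑ i, ‖u i‖ * ‖w i‖ := by simp only [norm_mul, norm_star]
    _ ≤ evNorm u * evNorm w := Real.sum_mul_le_sqrt_mul_sqrt _ _ _

lemma evNorm_indicator_mul (P : n → Prop) [DecidablePred P] (x : n → ℂ) :
    evNorm (fun k => (if P k then (1 : ℂ) else 0) * x k) =
      √(∑ k ∈ univ.filter P, ‖x k‖ ^ 2) := by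
  rw [evNorm, Finset.sum_filter]
  congr 1
  refine Finset.sum_congr rfl fun k _ => ?_
  split_ifs <;> simp

variable [DecidableEq n]

lemma evNorm_mulVec_le (X : Matrix n n ℂ) (v : n → ℂ) :
    evNorm (X *ᵥ v) ≤ opNorm X * evNorm v := by
  simpa [evNorm, EuclideanSpace.norm_eq, opNorm] using
    (LinearMap.toContinuousLinearMap (toEuclideanLin X)).le_opNorm (WithLp.toLp 2 v)

variable {U : Matrix n n ℂ}

lemma evNorm_unitary_mulVec (hU : U ∈ unitaryGroup n ℂ) (v : n → ℂ) :
    evNorm (U *ᵥ v) = evNorm v := by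
  rw [evNorm, evNorm, sum_norm_sq_eq_re_star_dotProduct, sum_norm_sq_eq_re_star_dotProduct,
    star_mulVec, dotProduct_mulVec, vecMul_vecMul, ← star_eq_conjTranspose,
    Unitary.star_mul_self_of_mem hU, vecMul_one]

lemma evNorm_unitary_col (hU : U ∈ unitaryGroup n ℂ) (j : n) : evNorm (fun r => U r j) = 1 := by
  rw [show (fun r => U r j) = U *ᵥ Pi.single j 1 from (mulVec_single_one U j).symm,
    evNorm_unitary_mulVec hU]
  simp [evNorm, Pi.single_apply, apply_ite (fun z : ℂ => ‖z‖), ite_pow]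

lemma norm_conj_unitary_apply_self_le (hU : U ∈ unitaryGroup n ℂ) (C : Matrix n n ℂ) (k : n) :
    ‖(Uᴴ * C * U) k k‖ ≤ opNorm C := by
  have hentry : (Uᴴ * C * U) k k = star (fun r => U r k) ⬝ᵥ C *ᵥ fun r => U r k := by
    rw [Matrix.mul_assoc, Matrix.mul_apply]
    simp [dotProduct, mulVec, Matrix.mul_apply]
  calc ‖(Uᴴ * C * U) k k‖ ≤ evNorm (fun r => U r k) * evNorm (C *ᵥ fun r => U r k) :=
        hentry ▸ norm_star_dotProduct_le _ _
    _ ≤ opNorm C := by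
        simpa [evNorm_unitary_col hU] using evNorm_mulVec_le C fun r => U r k

lemma conj_diagonal_mulVec_col (g : n → ℂ) (M : Matrix n n ℂ) (j : n) :
    (U * diagonal g * Uᴴ) *ᵥ (M *ᵥ fun r => U r j) = U *ᵥ fun k => g k * (Uᴴ * M * U) k j := by
  rw [show (fun r => U r j) = U *ᵥ Pi.single j 1 from (mulVec_single_one U j).symm, mulVec_mulVec, mulVec_mulVec,
    show U * diagonal g * Uᴴ * M * U = U * (diagonal g * (Uᴴ * M * U)) by
      simp only [Matrix.mul_assoc],
    ← mulVec_mulVec, mulVec_single_one]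
  congr 1
  ext k
  exact diagonal_mul g _ k j

lemma evNorm_conj_indicator_mulVec_col (hU : U ∈ unitaryGroup n ℂ) (P : n → Prop)
    [DecidablePred P] (M : Matrix n n ℂ) (j : n) :
    evNorm ((U * diagonal (fun k => if P k then (1 : ℂ) else 0) * Uᴴ) *ᵥ (M *ᵥ fun r => U r j)) =
      √(∑ k ∈ univ.filter P, ‖(Uᴴ * M * U) k j‖ ^ 2) := by
  rw [conj_diagonal_mulVec_col, evNorm_unitary_mulVec hU, evNorm_indicator_mul]

end

theorem stmt11_general (d : ℕ)
    (U : Matrix (Fin d) (Fin d) ℂ) (hU : U ∈ Matrix.unitaryGroup (Fin d) ℂ)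
    (E : Fin d → ℝ)
    (Δ : ℝ)
    (A B C D : Matrix (Fin d) (Fin d) ℂ) :
    norm ((1 / d : ℂ) * ∑ j : Fin d,
        ∑ k ∈ Finset.univ.filter fun k : Fin d => Δ ≤ |E k - E j|,
          (Uᴴ * A * U) j j * (Uᴴ * B * U) j k * (Uᴴ * C * U) k k * (Uᴴ * D * U) k j) ≤
      (opNorm C / d) * ∑ j : Fin d,
        norm ((Uᴴ * A * U) j j) *
          evNorm ((U * Matrix.diagonal (fun k => if Δ ≤ |E k - E j| then (1 : ℂ) else 0) * Uᴴ).mulVec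
            (Bᴴ.mulVec fun r => U r j)) *
          evNorm ((U * Matrix.diagonal (fun k => if Δ ≤ |E k - E j| then (1 : ℂ) else 0) * Uᴴ).mulVec
            (D.mulVec fun r => U r j)) := by
  have hB (j : Fin d) (k : Fin d) : ‖(Uᴴ * Bᴴ * U) k j‖ = ‖(Uᴴ * B * U) j k‖ := by
    rw [show Uᴴ * Bᴴ * U = (Uᴴ * B * U)ᴴ by simp [conjTranspose_mul, Matrix.mul_assoc],
      conjTranspose_apply, norm_star]
  have hd : ‖(1 / d : ℂ)‖ = 1 / d := by simp
  simp only [evNorm_conj_indicator_mulVec_col hU, hB, norm_mul, hd]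
  calc _ ≤ 1 / (d : ℝ) * (opNorm C * _) :=
        mul_le_mul_of_nonneg_left (norm_sum_diag_mul_offDiag_le _ _ _ _ _ (norm_nonneg _)
          fun k => norm_conj_unitary_apply_self_le hU C k) (by positivity)
    _ = _ := by ring

theorem stmt11 (d : ℕ) (H : Matrix (Fin d) (Fin d) ℂ)
    (U : Matrix (Fin d) (Fin d) ℂ) (hU : U ∈ Matrix.unitaryGroup (Fin d) ℂ)
    (E : Fin d → ℝ) (hH : H = U * Matrix.diagonal (fun j => (E j : ℂ)) * Uᴴ)
    (Δ : ℝ) (hΔ : 0 < Δ)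
    (A B C D : Matrix (Fin d) (Fin d) ℂ) :
    norm ((1 / d : ℂ) * ∑ j : Fin d,
        ∑ k ∈ Finset.univ.filter fun k : Fin d => Δ ≤ |E k - E j|,
          (Uᴴ * A * U) j j * (Uᴴ * B * U) j k * (Uᴴ * C * U) k k * (Uᴴ * D * U) k j) ≤
      (opNorm C / d) * ∑ j : Fin d,
        norm ((Uᴴ * A * U) j j) *
          evNorm ((U * Matrix.diagonal (fun k => if Δ ≤ |E k - E j| then (1 : ℂ) else 0) * Uᴴ).mulVec
            (Bᴴ.mulVec fun r => U r j)) *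
          evNorm ((U * Matrix.diagonal (fun k => if Δ ≤ |E k - E j| then (1 : ℂ) else 0) * Uᴴ).mulVec
            (D.mulVec fun r => U r j)) :=
  stmt11_general d U hU E Δ A B C D
end

section
/- Let H be a Hermitian d×d complex matrix with orthonormal eigenbasis |1⟩,…,|d⟩ and eigenvalues E_1,…,E_d, and let Δ > 0. Then for all d×d complex matrices A, B, C, D: | (1/d) Σ_j Σ_{k : |E_k − E_j| < Δ} A_{jj} B_{jk} (C_{jj} − C_{kk}) D_{kj} | ≤ (‖B‖ ‖D‖ / d) Σ_j |A_{jj}| · max_{k : |E_k − E_j| < Δ} |C_{jj} − C_{kk}|, where ‖·‖ denotes the operator norm. -/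
open Matrix Finset
open scoped Classical

open scoped Matrix.Norms.L2Operator

/-!
Bound each summand by `|A_jj| |B_jk| |D_kj| · max_k |C_jj - C_kk|`, extend the inner sum to all
`k`, and apply Cauchy–Schwarz: the `j`-th row of `B` and the `j`-th column of `D` have `ℓ²` norm at
most `‖B‖` and `‖D‖`. Conjugating by the unitary `U` does not change operator norms.
-/

namespace Matrix

variable {n : Type*} [Fintype n] [DecidableEq n]

lemma opNorm_eq_l2_opNorm (X : Matrix n n ℂ) : opNorm X = ‖X‖ := rfl

lemma sqrt_sum_norm_sq_col_le_l2_opNorm (X : Matrix n n ℂ) (j : n) :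
    √(∑ i, ‖X i j‖ ^ 2) ≤ ‖X‖ := by
  have h := X.l2_opNorm_mulVec (EuclideanSpace.single j 1)
  rw [PiLp.norm_single, norm_one, mul_one, EuclideanSpace.norm_eq] at h
  refine (le_of_eq ?_).trans h
  congr 1
  refine sum_congr rfl fun i _ ↦ ?_
  simp

lemma sqrt_sum_norm_sq_row_le_l2_opNorm (X : Matrix n n ℂ) (i : n) :
    √(∑ j, ‖X i j‖ ^ 2) ≤ ‖X‖ := by
  simpa [l2_opNorm_conjTranspose] using sqrt_sum_norm_sq_col_le_l2_opNorm Xᴴ i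

lemma sum_norm_mul_norm_le_l2_opNorm_mul (X Y : Matrix n n ℂ) (j : n) :
    ∑ k, ‖X j k‖ * ‖Y k j‖ ≤ ‖X‖ * ‖Y‖ :=
  (Real.sum_mul_le_sqrt_mul_sqrt _ _ _).trans <|
    mul_le_mul (sqrt_sum_norm_sq_row_le_l2_opNorm X j) (sqrt_sum_norm_sq_col_le_l2_opNorm Y j)
      (Real.sqrt_nonneg _) (norm_nonneg _)

lemma l2_opNorm_conjTranspose_mul_mul_of_mem_unitaryGroup {U : Matrix n n ℂ}
    (hU : U ∈ unitaryGroup n ℂ) (X : Matrix n n ℂ) : ‖Uᴴ * X * U‖ = ‖X‖ := by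
  rw [CStarRing.norm_mul_mem_unitary _ hU, ← star_eq_conjTranspose,
    CStarRing.norm_mem_unitary_mul _ (Unitary.star_mem hU)]

lemma norm_sum_sum_diag_mul_mul_mul_le (A B D : Matrix n n ℂ) (c : n → n → ℂ)
    (s : n → Finset n) (M : n → ℝ) (hM : ∀ j, 0 ≤ M j) (hc : ∀ j, ∀ k ∈ s j, ‖c j k‖ ≤ M j) :
    ‖∑ j, ∑ k ∈ s j, A j j * B j k * c j k * D k j‖ ≤ ‖B‖ * ‖D‖ * ∑ j, ‖A j j‖ * M j := by
  have hAM (j : n) : 0 ≤ ‖A j j‖ * M j := mul_nonneg (norm_nonneg _) (hM j)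
  calc ‖∑ j, ∑ k ∈ s j, A j j * B j k * c j k * D k j‖
      ≤ ∑ j, ∑ k ∈ s j, ‖A j j‖ * M j * (‖B j k‖ * ‖D k j‖) := by
        refine (norm_sum_le _ _).trans <| sum_le_sum fun j _ ↦
          (norm_sum_le _ _).trans <| sum_le_sum fun k hk ↦ ?_
        calc ‖A j j * B j k * c j k * D k j‖
            = ‖A j j‖ * ‖c j k‖ * (‖B j k‖ * ‖D k j‖) := by simp only [norm_mul]; ring
          _ ≤ ‖A j j‖ * M j * (‖B j k‖ * ‖D k j‖) := by gcongr; exact hc j k hk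
    _ ≤ ∑ j, ‖A j j‖ * M j * ∑ k, ‖B j k‖ * ‖D k j‖ := by
        gcongr with j
        rw [mul_sum]
        exact sum_le_sum_of_subset_of_nonneg (subset_univ _) fun k _ _ ↦
          mul_nonneg (hAM j) (by positivity)
    _ ≤ ∑ j, ‖A j j‖ * M j * (‖B‖ * ‖D‖) := by
        gcongr with j
        · exact hAM j
        · exact sum_norm_mul_norm_le_l2_opNorm_mul B D j
    _ = ‖B‖ * ‖D‖ * ∑ j, ‖A j j‖ * M j := by
        rw [mul_sum]
        exact sum_congr rfl fun j _ ↦ by ring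

end Matrix

theorem stmt12_general (d : ℕ)
    (U : Matrix (Fin d) (Fin d) ℂ) (hU : U ∈ Matrix.unitaryGroup (Fin d) ℂ)
    (E : Fin d → ℝ)
    (Δ : ℝ)
    (A B C D : Matrix (Fin d) (Fin d) ℂ) :
    ‖(1 / d : ℂ) * ∑ j : Fin d,
        ∑ k ∈ Finset.univ.filter fun k : Fin d => |E k - E j| < Δ,
          (Uᴴ * A * U) j j * (Uᴴ * B * U) j k *
            ((Uᴴ * C * U) j j - (Uᴴ * C * U) k k) * (Uᴴ * D * U) k j‖ ≤
      (opNorm B * opNorm D / d) * ∑ j : Fin d,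
        ‖(Uᴴ * A * U) j j‖ *
          sSup ((fun k : Fin d => ‖(Uᴴ * C * U) j j - (Uᴴ * C * U) k k‖) ''
            {k : Fin d | |E k - E j| < Δ}) := by
  set C' := Uᴴ * C * U
  set M : Fin d → ℝ := fun j ↦
    sSup ((fun k : Fin d => ‖C' j j - C' k k‖) '' {k : Fin d | |E k - E j| < Δ})
  -- `sSup ∅ = 0` in `ℝ`, so `M j ≥ 0` even when no `k` is admissible
  have hM : ∀ j, 0 ≤ M j := fun j ↦
    Real.sSup_nonneg <| by rintro _ ⟨k, -, rfl⟩; exact norm_nonneg _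
  have hC : ∀ j, ∀ k ∈ univ.filter fun k : Fin d => |E k - E j| < Δ,
      ‖C' j j - C' k k‖ ≤ M j := fun j k hk ↦
    le_csSup ((Set.toFinite _).image _).bddAbove ⟨k, by simpa using hk, rfl⟩
  have hsum := norm_sum_sum_diag_mul_mul_mul_le (Uᴴ * A * U) (Uᴴ * B * U) (Uᴴ * D * U)
    (fun j k ↦ C' j j - C' k k) _ M hM hC
  rw [l2_opNorm_conjTranspose_mul_mul_of_mem_unitaryGroup hU,
    l2_opNorm_conjTranspose_mul_mul_of_mem_unitaryGroup hU] at hsum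
  rw [norm_mul, norm_div, norm_one, Complex.norm_natCast, opNorm_eq_l2_opNorm,
    opNorm_eq_l2_opNorm]
  calc 1 / (d : ℝ) * ‖_‖ ≤ 1 / d * (‖B‖ * ‖D‖ * ∑ j, ‖(Uᴴ * A * U) j j‖ * M j) := by gcongr
    _ = _ := by ring

theorem stmt12 (d : ℕ) (H : Matrix (Fin d) (Fin d) ℂ)
    (U : Matrix (Fin d) (Fin d) ℂ) (hU : U ∈ Matrix.unitaryGroup (Fin d) ℂ)
    (E : Fin d → ℝ) (hH : H = U * Matrix.diagonal (fun j => (E j : ℂ)) * Uᴴ)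
    (Δ : ℝ) (hΔ : 0 < Δ)
    (A B C D : Matrix (Fin d) (Fin d) ℂ) :
    ‖(1 / d : ℂ) * ∑ j : Fin d,
        ∑ k ∈ Finset.univ.filter fun k : Fin d => |E k - E j| < Δ,
          (Uᴴ * A * U) j j * (Uᴴ * B * U) j k *
            ((Uᴴ * C * U) j j - (Uᴴ * C * U) k k) * (Uᴴ * D * U) k j‖ ≤
      (opNorm B * opNorm D / d) * ∑ j : Fin d,
        ‖(Uᴴ * A * U) j j‖ *
          sSup ((fun k : Fin d => ‖(Uᴴ * C * U) j j - (Uᴴ * C * U) k k‖) ''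
            {k : Fin d | |E k - E j| < Δ}) :=
  stmt12_general d U hU E Δ A B C D
end
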